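/- If A = [[a,b],[c,d]] is a Vahlen matrix, then ã a, b̃ b, c̃ c, d̃ d are all real scalars (where ~ is the reversal). Consequently, for any x ∈ V, the quantity (x c~ + d~)(cx + d) is a real scalar. -/

import Mathlib

open CliffordAlgebra

noncomputable def negQhat {V : Type*} [AddCommGroup V] [Module ℝ V]
    (Q : QuadraticForm ℝ V) : QuadraticForm ℝ (V × ℝ × ℝ) :=
  QuadraticMap.prod (-Q) (QuadraticMap.prod QuadraticMap.sq (-QuadraticMap.sq))

/-- The Clifford map `j : V ⊕ ℝ^{1,1} → Mat₂(Cl(V))` (convention `v² = -Q v`). -/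
noncomputable def jmat {V : Type*} [AddCommGroup V] [Module ℝ V]
    (Q : QuadraticForm ℝ V) (x : V × ℝ × ℝ) :
    Matrix (Fin 2) (Fin 2) (CliffordAlgebra (-Q)) :=
  !![ι (-Q) x.1, algebraMap ℝ _ (x.2.1 - x.2.2);
     algebraMap ℝ _ (x.2.1 + x.2.2), -ι (-Q) x.1]

/-- A Vahlen matrix: an element of `Mat₂(Cl(V))` corresponding, under the
`(1,1)`-periodicity isomorphism `F`, to an element of the Lipschitz group
`Γ(V ⊕ ℝ^{1,1})`, i.e. an invertible `g` with `g x ĝ⁻¹ ∈ V ⊕ ℝ^{1,1}` for all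
`x ∈ V ⊕ ℝ^{1,1}`. -/
def IsVahlen {V : Type*} [AddCommGroup V] [Module ℝ V] (Q : QuadraticForm ℝ V)
    (F : CliffordAlgebra (negQhat Q) ≃ₐ[ℝ] Matrix (Fin 2) (Fin 2) (CliffordAlgebra (-Q)))
    (A : Matrix (Fin 2) (Fin 2) (CliffordAlgebra (-Q))) : Prop :=
  IsUnit (F.symm A) ∧ ∀ x : V × ℝ × ℝ, ∃ y : V × ℝ × ℝ,
    F.symm A * ι (negQhat Q) x * Ring.inverse (involute (F.symm A)) = ι (negQhat Q) y

/-- The pseudo-determinant `Δ([[a,b],[c,d]]) = a d~ - b c~`. -/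
noncomputable def pdet {V : Type*} [AddCommGroup V] [Module ℝ V] (Q : QuadraticForm ℝ V)
    (A : Matrix (Fin 2) (Fin 2) (CliffordAlgebra (-Q))) : CliffordAlgebra (-Q) :=
  A 0 0 * reverse (A 1 1) - A 0 1 * reverse (A 1 0)

/-!
Through `F`, a Vahlen matrix is an element `g` of the Lipschitz group of `V ⊕ ℝ^{1,1}`, a
nondegenerate quadratic space. There, an element `z` with `z v = v ẑ` for all vectors `v` is a
scalar: `v z - ẑ v = ⟨v, ·⟩⌋z`, so every contraction of `z` vanishes. Applied to `ĝ⁻¹ g` and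
`ḡ g` this gives `ĝ = μ g` and `ḡ g ∈ ℝ`; conjugation by `g` then maps the vectors into, hence
(its image generating the algebra) onto, the vectors, and so `ḡ x g` is a vector for every vector
`x`.

Clifford conjugation reads `[[a,b],[c,d]] ↦ [[d̃,-b̃],[-c̃,ã]]` on matrices, and vectors have the
shape `[[u, s - t], [s + t, -u]]` with `u ∈ V`. At the null vectors `n₀` and `n∞`, `ḡ x g` is
`[[-b̃a, -b̃b], [ãa, ãb]]` and `[[d̃c, d̃d], [-c̃c, -c̃d]]`: so `ãa, b̃b, c̃c, d̃d` are real and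
`d̃c = u ∈ V`, whence `(x c̃ + d̃)(c x + d) = x (c̃c) x + (x u + u x) + d̃d` is real.
-/

open QuadraticMap

namespace CliffordAlgebra

section CommRing

variable {R M : Type*} [CommRing R] [AddCommGroup M] [Module R M] {Q : QuadraticForm R M}

@[elab_as_elim]
theorem adjoin_ι_induction {s : Set M}
    {P : (z : CliffordAlgebra Q) → z ∈ Algebra.adjoin R (ι Q '' s) → Prop}
    (one : P 1 (one_mem _))
    (ι_mul : ∀ m (hm : m ∈ s) z hz, P z hz →
      P (ι Q m * z) (mul_mem (Algebra.subset_adjoin (Set.mem_image_of_mem _ hm)) hz))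
    (add : ∀ x y hx hy, P x hx → P y hy → P (x + y) (add_mem hx hy))
    (smul : ∀ (r : R) x hx, P x hx → P (r • x) (Subalgebra.smul_mem _ hx r))
    {z : CliffordAlgebra Q} (hz : z ∈ Algebra.adjoin R (ι Q '' s)) : P z hz := by
  suffices ∃ hz, P z hz from this.elim fun _ h => h
  rw [← Subalgebra.mem_toSubmodule, Algebra.adjoin_eq_span] at hz
  induction hz using Submodule.span_induction with
  | mem x hx =>
    induction hx using Submonoid.closure_induction_left with
    | one => exact ⟨_, one⟩
    | mul_left x hx y _ hy =>
      obtain ⟨m, hm, rfl⟩ := hx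
      obtain ⟨hy, hPy⟩ := hy
      exact ⟨_, ι_mul m hm y hy hPy⟩
  | zero => simpa using smul 0 1 (one_mem _) one
  | add x y _ _ hx hy =>
    obtain ⟨hx, hPx⟩ := hx
    obtain ⟨hy, hPy⟩ := hy
    exact ⟨_, add x y hx hy hPx hPy⟩
  | smul r x _ hx =>
    obtain ⟨hx, hPx⟩ := hx
    exact ⟨_, smul r x hx hPx⟩

theorem ι_mem_adjoin_of_mem_span {s : Set M} {m : M} (hm : m ∈ Submodule.span R s) :
    ι Q m ∈ Algebra.adjoin R (ι Q '' s) := by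
  have : ι Q m ∈ Submodule.span R (ι Q '' s) := by
    rw [← Submodule.map_span]; exact Submodule.mem_map_of_mem hm
  exact (Submodule.span_le (p := Subalgebra.toSubmodule (Algebra.adjoin R (ι Q '' s)))).mpr
    Algebra.subset_adjoin this

theorem exists_finite_mem_adjoin (z : CliffordAlgebra Q) :
    ∃ s : Set M, s.Finite ∧ z ∈ Algebra.adjoin R (ι Q '' s) := by
  induction z using CliffordAlgebra.induction with
  | algebraMap r => exact ⟨∅, Set.finite_empty, Subalgebra.algebraMap_mem _ r⟩
  | ι m => exact ⟨{m}, Set.finite_singleton m, Algebra.subset_adjoin ⟨m, rfl, rfl⟩⟩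
  | mul x y hx hy =>
    obtain ⟨s, hs, hx⟩ := hx
    obtain ⟨t, ht, hy⟩ := hy
    exact ⟨s ∪ t, hs.union ht, mul_mem
      (Algebra.adjoin_mono (Set.image_mono Set.subset_union_left) hx)
      (Algebra.adjoin_mono (Set.image_mono Set.subset_union_right) hy)⟩
  | add x y hx hy =>
    obtain ⟨s, hs, hx⟩ := hx
    obtain ⟨t, ht, hy⟩ := hy
    exact ⟨s ∪ t, hs.union ht, add_mem
      (Algebra.adjoin_mono (Set.image_mono Set.subset_union_left) hx)
      (Algebra.adjoin_mono (Set.image_mono Set.subset_union_right) hy)⟩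

theorem contractLeft_eq_of_eqOn {s : Set M} {f g : Module.Dual R M} (hfg : Set.EqOn f g s)
    {z : CliffordAlgebra Q} (hz : z ∈ Algebra.adjoin R (ι Q '' s)) :
    contractLeft f z = contractLeft g z := by
  induction hz using adjoin_ι_induction with
  | one => rw [contractLeft_one, contractLeft_one]
  | ι_mul m hm z _ h => rw [contractLeft_ι_mul, contractLeft_ι_mul, hfg hm, h]
  | add x y _ _ hx hy => rw [map_add, map_add, hx, hy]
  | smul r x _ hx => rw [map_smul, map_smul, hx]

theorem contractLeft_eq_zero_of_forall_eq_zero {s : Set M} {f : Module.Dual R M}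
    (hf : ∀ m ∈ s, f m = 0) {z : CliffordAlgebra Q} (hz : z ∈ Algebra.adjoin R (ι Q '' s)) :
    contractLeft f z = 0 := by
  rw [contractLeft_eq_of_eqOn (g := 0) (fun m hm => hf m hm) hz, map_zero, LinearMap.zero_apply]

theorem exists_add_ι_mul_of_mem_adjoin_insert {s : Set M} {e : M} {z : CliffordAlgebra Q}
    (hz : z ∈ Algebra.adjoin R (ι Q '' insert e s)) :
    ∃ p ∈ Algebra.adjoin R (ι Q '' s), ∃ q ∈ Algebra.adjoin R (ι Q '' s),
      z = p + ι Q e * q := by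
  induction hz using adjoin_ι_induction with
  | one => exact ⟨1, one_mem _, 0, zero_mem _, by rw [mul_zero, add_zero]⟩
  | ι_mul m hm z _ h =>
    obtain ⟨p, hp, q, hq, rfl⟩ := h
    rcases hm with rfl | hm
    · refine ⟨Q m • q, Subalgebra.smul_mem _ hq _, p, hp, ?_⟩
      rw [mul_add, ← mul_assoc, ι_sq_scalar, ← Algebra.smul_def, add_comm]
    · have hιm := Algebra.subset_adjoin (R := R) (Set.mem_image_of_mem (ι Q) hm)
      refine ⟨ι Q m * p + polar Q m e • q,
        add_mem (mul_mem hιm hp) (Subalgebra.smul_mem _ hq _), -(ι Q m * q),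
        neg_mem (mul_mem hιm hq), ?_⟩
      rw [mul_add, ← mul_assoc, ι_mul_ι_comm, Algebra.smul_def]
      noncomm_ring
  | add x y _ _ hx hy =>
    obtain ⟨p, hp, q, hq, rfl⟩ := hx
    obtain ⟨p', hp', q', hq', rfl⟩ := hy
    exact ⟨p + p', add_mem hp hp', q + q', add_mem hq hq', by rw [mul_add]; abel⟩
  | smul r x _ hx =>
    obtain ⟨p, hp, q, hq, rfl⟩ := hx
    exact ⟨r • p, Subalgebra.smul_mem _ hp r, r • q, Subalgebra.smul_mem _ hq r, by
      rw [smul_add, mul_smul_comm]⟩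

theorem ι_mul_sub_involute_mul_ι (v : M) (x : CliffordAlgebra Q) :
    ι Q v * x - involute x * ι Q v = contractLeft (polarBilin Q v) x := by
  induction x using CliffordAlgebra.left_induction with
  | algebraMap r => rw [contractLeft_algebraMap, AlgHom.commutes, Algebra.commutes, sub_self]
  | add x y hx hy => rw [map_add, map_add, mul_add, add_mul, ← hx, ← hy]; abel
  | ι_mul x m hx =>
    rw [contractLeft_ι_mul, ← hx, map_mul, involute_ι, ← mul_assoc, ι_mul_ι_comm,
      polarBilin_apply_apply, Algebra.smul_def]
    noncomm_ring

theorem reverse_mul_self_mul_ι_add_eq {c d : CliffordAlgebra Q} {r s : R} {w : M}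
    (hc : reverse c * c = algebraMap R _ r) (hd : reverse d * d = algebraMap R _ s)
    (hdc : reverse d * c = ι Q w) (x : M) :
    reverse (c * ι Q x + d) * (c * ι Q x + d) = algebraMap R _ (r * Q x + polar Q x w + s) := by
  have hcd : reverse c * d = ι Q w := by
    rw [← reverse_ι, ← hdc, reverse.map_mul, reverse_reverse]
  calc reverse (c * ι Q x + d) * (c * ι Q x + d)
      = ι Q x * (reverse c * c) * ι Q x + (ι Q x * (reverse c * d) + reverse d * c * ι Q x)
        + reverse d * d := by
        rw [map_add, reverse.map_mul, reverse_ι]; noncomm_ring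
    _ = _ := by
        rw [hc, hd, hcd, hdc, ι_mul_ι_add_swap, ← Algebra.commutes, mul_assoc, ι_sq_scalar,
          ← map_mul, ← map_add, ← map_add, mul_comm]

end CommRing

section Field

variable {K M : Type*} [Field K] [AddCommGroup M] [Module K M] {Q : QuadraticForm K M}

theorem exists_eq_algebraMap_of_forall_contractLeft_eq_zero {z : CliffordAlgebra Q}
    (hz : ∀ f : Module.Dual K M, contractLeft f z = 0) : ∃ r : K, z = algebraMap K _ r := by
  obtain ⟨s, hs, hzs⟩ := exists_finite_mem_adjoin z
  induction s, hs using Set.Finite.induction_on generalizing z with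
  | empty =>
    rw [Set.image_empty, Algebra.adjoin_empty, Algebra.mem_bot] at hzs
    obtain ⟨r, rfl⟩ := hzs
    exact ⟨r, rfl⟩
  | @insert e s _ _ ih =>
    obtain ⟨p, hp, q, hq, rfl⟩ := exists_add_ι_mul_of_mem_adjoin_insert hzs
    by_cases he : e ∈ Submodule.span K s
    · exact ih hz (add_mem hp (mul_mem (ι_mem_adjoin_of_mem_span he) hq))
    · -- a functional killing `s` but not `e` contracts `p + e q` to `f e • q`
      obtain ⟨f, hfe, hfs⟩ := Submodule.exists_dual_map_eq_bot_of_notMem he inferInstance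
      have hfs' : ∀ m ∈ s, f m = 0 := fun m hm =>
        LinearMap.mem_ker.1 (LinearMap.le_ker_iff_map.2 hfs (Submodule.subset_span hm))
      have hq0 : q = 0 := by
        have h := hz f
        rw [map_add, contractLeft_ι_mul, contractLeft_eq_zero_of_forall_eq_zero hfs' hp,
          contractLeft_eq_zero_of_forall_eq_zero hfs' hq, mul_zero, sub_zero, zero_add] at h
        exact (smul_eq_zero.mp h).resolve_left hfe
      subst hq0
      rw [mul_zero, add_zero] at hz ⊢
      exact ih hz hp

theorem exists_polarBilin_eqOn (hQ : (polarBilin Q).SeparatingLeft) {s : Set M}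
    (hs : s.Finite) (f : Module.Dual K M) : ∃ v : M, Set.EqOn (polarBilin Q v) f s := by
  let U := Submodule.span K s
  have : FiniteDimensional K U := FiniteDimensional.span_of_finite K hs
  let T : M →ₗ[K] Module.Dual K U := (polarBilin Q).compl₂ U.subtype
  have hT : Function.Surjective T := by
    rw [← LinearMap.dualMap_injective_iff, ← LinearMap.ker_eq_bot, Submodule.eq_bot_iff]
    intro φ hφ
    obtain ⟨u, rfl⟩ := (Module.evalEquiv K U).surjective φ
    have hu : (u : M) = 0 := hQ u fun w => by
      rw [polarBilin_apply_apply, polar_comm]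
      exact LinearMap.congr_fun hφ w
    rw [show u = 0 from Subtype.ext hu, map_zero]
  obtain ⟨v, hv⟩ := hT (f ∘ₗ U.subtype)
  exact ⟨v, fun m hm => LinearMap.congr_fun hv ⟨m, Submodule.subset_span hm⟩⟩

theorem exists_eq_algebraMap_of_mul_ι_eq (hQ : (polarBilin Q).SeparatingLeft)
    {z : CliffordAlgebra Q} (hz : ∀ v, z * ι Q v = ι Q v * involute z) :
    ∃ r : K, z = algebraMap K _ r := by
  refine exists_eq_algebraMap_of_forall_contractLeft_eq_zero fun f => ?_
  obtain ⟨s, hs, hzs⟩ := exists_finite_mem_adjoin z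
  obtain ⟨v, hv⟩ := exists_polarBilin_eqOn hQ hs f
  rw [← contractLeft_eq_of_eqOn hv hzs, ← ι_mul_sub_involute_mul_ι, sub_eq_zero]
  have h := congrArg involute (hz v)
  rwa [map_mul, map_mul, involute_ι, involute_involute, mul_neg, neg_mul, neg_inj, eq_comm] at h

theorem exists_ι_eq_of_forall_exists_ι_eq [Nontrivial (CliffordAlgebra Q)]
    (ψ : CliffordAlgebra Q ≃ₐ[K] CliffordAlgebra Q) (h : ∀ x, ∃ y, ψ (ι Q x) = ι Q y)
    (v : M) : ∃ x, ψ (ι Q x) = ι Q v := by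
  -- `ψ` is onto, so the vectors `W` it hits generate the algebra; a functional killing `W`
  -- would then kill all contractions, yet `f⌋ι v = f v`
  let W : Submodule K M :=
    (Submodule.map ψ.toLinearMap (LinearMap.range (ι Q))).comap (ι Q)
  have hW : ∀ z, ψ z ∈ Algebra.adjoin K (ι Q '' W) := by
    intro z
    induction z using CliffordAlgebra.induction with
    | algebraMap r => rw [AlgEquiv.commutes]; exact Subalgebra.algebraMap_mem _ r
    | ι x =>
      obtain ⟨y, hy⟩ := h x
      rw [hy]
      exact Algebra.subset_adjoin ⟨y, ⟨ι Q x, ⟨x, rfl⟩, hy⟩, rfl⟩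
    | mul x y hx hy => rw [map_mul]; exact mul_mem hx hy
    | add x y hx hy => rw [map_add]; exact add_mem hx hy
  by_contra! hv
  have hvW : v ∉ W := by
    rintro ⟨_, ⟨x, rfl⟩, hx⟩
    exact hv x hx
  obtain ⟨f, hfv, hfW⟩ := Submodule.exists_dual_map_eq_bot_of_notMem hvW inferInstance
  have hfW' : ∀ m ∈ (W : Set M), f m = 0 := fun m hm =>
    LinearMap.mem_ker.1 (LinearMap.le_ker_iff_map.2 hfW hm)
  have h0 := contractLeft_eq_zero_of_forall_eq_zero hfW' (ψ.apply_symm_apply (ι Q v) ▸ hW _)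
  rw [contractLeft_ι, map_eq_zero_iff _ (algebraMap K _).injective] at h0
  exact hfv h0

section Lipschitz

variable {g : CliffordAlgebra Q}

theorem involute_mul_ι_eq_of_mul_ι_eq {x y : M} (h : g * ι Q x = ι Q y * involute g) :
    involute g * ι Q x = ι Q y * g := by
  have h' := congrArg involute h
  rwa [map_mul, map_mul, involute_ι, involute_ι, involute_involute, mul_neg, neg_mul,
    neg_inj] at h'

theorem exists_star_mul_self_eq_algebraMap (hQ : (polarBilin Q).SeparatingLeft)
    (hΓ : ∀ x, ∃ y, g * ι Q x = ι Q y * involute g) :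
    ∃ s : K, star g * g = algebraMap K _ s := by
  refine exists_eq_algebraMap_of_mul_ι_eq hQ fun v => ?_
  obtain ⟨y, h⟩ := hΓ v
  have h' : star g * ι Q y = ι Q v * star (involute g) := by
    have := congrArg star (involute_mul_ι_eq_of_mul_ι_eq h)
    rwa [star_mul, star_mul, star_ι, star_ι, mul_neg, neg_mul, neg_inj, eq_comm] at this
  rw [mul_assoc, h, ← mul_assoc, h', mul_assoc, map_mul, star_def, star_def,
    reverse_involute_commute.eq]

theorem exists_involute_eq_smul (hQ : (polarBilin Q).SeparatingLeft) (hg : IsUnit g)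
    (hΓ : ∀ x, ∃ y, g * ι Q x = ι Q y * involute g) :
    ∃ μ : K, involute g = μ • g := by
  obtain ⟨g', hgg', hg'g⟩ := isUnit_iff_exists.mp hg
  obtain ⟨μ, hμ⟩ := exists_eq_algebraMap_of_mul_ι_eq hQ (z := involute g' * g) fun v => by
    obtain ⟨y, h⟩ := hΓ v
    calc involute g' * g * ι Q v = involute g' * (ι Q y * g * g') * involute g := by
          rw [mul_assoc (ι Q y), hgg', mul_one, mul_assoc, h, mul_assoc]
      _ = involute g' * involute g * ι Q v * g' * involute g := by
          rw [← involute_mul_ι_eq_of_mul_ι_eq h]; noncomm_ring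
      _ = ι Q v * involute (involute g' * g) := by
          rw [← map_mul, hg'g, map_one, one_mul, map_mul, involute_involute, mul_assoc]
  refine ⟨μ, ?_⟩
  calc involute g = involute (involute g * (involute g' * g)) := by
        rw [← mul_assoc, ← map_mul, hgg', map_one, one_mul]
    _ = μ • g := by
        rw [hμ, ← Algebra.commutes, ← Algebra.smul_def, map_smul, involute_involute]

theorem exists_star_mul_ι_mul_eq_ι [Nontrivial (CliffordAlgebra Q)]
    (hQ : (polarBilin Q).SeparatingLeft) (hg : IsUnit g)
    (hΓ : ∀ x, ∃ y, g * ι Q x = ι Q y * involute g) (x : M) :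
    ∃ y, star g * ι Q x * g = ι Q y := by
  obtain ⟨μ, hμ⟩ := exists_involute_eq_smul hQ hg hΓ
  obtain ⟨s, hs⟩ := exists_star_mul_self_eq_algebraMap hQ hΓ
  obtain ⟨u, rfl⟩ := hg
  -- as `ĝ = μ g`, conjugation by `g` maps vectors to vectors, hence onto them
  let ψ := MulSemiringAction.toAlgEquiv K (CliffordAlgebra Q) (ConjAct.toConjAct u)
  have hψ (z : CliffordAlgebra Q) : ψ z = u * z * ↑u⁻¹ := ConjAct.units_smul_def _ _
  have hψι (x : M) : ∃ y, ψ (ι Q x) = ι Q y := by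
    obtain ⟨y, h⟩ := hΓ x
    refine ⟨μ • y, ?_⟩
    rw [hψ, h, hμ, mul_smul_comm, smul_mul_assoc, mul_assoc, Units.mul_inv, mul_one, map_smul]
  obtain ⟨x', hx'⟩ := exists_ι_eq_of_forall_exists_ι_eq ψ hψι x
  refine ⟨s • x', ?_⟩
  rw [← hx', hψ, map_smul, Algebra.smul_def, ← hs]
  calc star ↑u * (↑u * ι Q x' * ↑u⁻¹) * ↑u
      = star ↑u * ↑u * ι Q x' * (↑u⁻¹ * ↑u) := by noncomm_ring
    _ = _ := by rw [Units.inv_mul, mul_one]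

end Lipschitz

end Field

end CliffordAlgebra

namespace QuadraticMap

variable {K M₁ M₂ : Type*} [Field K] [AddCommGroup M₁] [Module K M₁] [AddCommGroup M₂]
  [Module K M₂]

theorem separatingLeft_polarBilin_prod {Q₁ : QuadraticForm K M₁} {Q₂ : QuadraticForm K M₂}
    (h₁ : (polarBilin Q₁).SeparatingLeft) (h₂ : (polarBilin Q₂).SeparatingLeft) :
    (polarBilin (Q₁.prod Q₂)).SeparatingLeft := by
  rintro ⟨w₁, w₂⟩ hw
  refine Prod.ext (h₁ w₁ fun u => ?_) (h₂ w₂ fun u => ?_)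
  · simpa using hw (u, 0)
  · simpa using hw (0, u)

theorem separatingLeft_polarBilin_neg {Q : QuadraticForm K M₁}
    (h : (polarBilin Q).SeparatingLeft) : (polarBilin (-Q)).SeparatingLeft :=
  fun w hw => h w fun u => by simpa [polar_neg] using hw u

theorem separatingLeft_polarBilin_sq [NeZero (2 : K)] :
    (polarBilin (sq : QuadraticForm K K)).SeparatingLeft := fun w hw => by
  have h := hw 1
  rw [polarBilin_apply_apply, polar, sq_apply, sq_apply, sq_apply] at h
  have : (2 : K) * w = 0 := by linear_combination h
  exact (mul_eq_zero.mp this).resolve_left two_ne_zero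

end QuadraticMap

section conjMat

variable {R M : Type*} [CommRing R] [AddCommGroup M] [Module R M] {Q : QuadraticForm R M}

def conjMat (A : Matrix (Fin 2) (Fin 2) (CliffordAlgebra Q)) :
    Matrix (Fin 2) (Fin 2) (CliffordAlgebra Q) :=
  !![reverse (A 1 1), -reverse (A 0 1); -reverse (A 1 0), reverse (A 0 0)]

theorem conjMat_mul (A B : Matrix (Fin 2) (Fin 2) (CliffordAlgebra Q)) :
    conjMat (A * B) = conjMat B * conjMat A := by
  ext i j
  fin_cases i <;> fin_cases j <;>
    simp [conjMat, Matrix.mul_apply, Fin.sum_univ_two, reverse.map_mul, add_comm]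

theorem conjMat_add (A B : Matrix (Fin 2) (Fin 2) (CliffordAlgebra Q)) :
    conjMat (A + B) = conjMat A + conjMat B := by
  ext i j
  fin_cases i <;> fin_cases j <;> simp [conjMat, add_comm]

theorem conjMat_algebraMap (r : R) :
    conjMat (algebraMap R (Matrix (Fin 2) (Fin 2) (CliffordAlgebra Q)) r) = algebraMap R _ r := by
  ext i j
  fin_cases i <;> fin_cases j <;> simp [conjMat, Matrix.algebraMap_matrix_apply]

theorem conjMat_mul_nullZero_mul (a b c d : CliffordAlgebra Q) :
    conjMat !![a, b; c, d] * !![0, 0; 1, 0] * !![a, b; c, d] =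
      !![-(reverse b * a), -(reverse b * b); reverse a * a, reverse a * b] := by
  simp [conjMat]

theorem conjMat_mul_nullInfty_mul (a b c d : CliffordAlgebra Q) :
    conjMat !![a, b; c, d] * !![0, 1; 0, 0] * !![a, b; c, d] =
      !![reverse d * c, reverse d * d; -(reverse c * c), -(reverse c * d)] := by
  simp [conjMat]

end conjMat

section Vahlen

variable {V : Type*} [AddCommGroup V] [Module ℝ V] {Q : QuadraticForm ℝ V}

theorem separatingLeft_polarBilin_negQhat (hQ : (polarBilin Q).SeparatingLeft) :
    (polarBilin (negQhat Q)).SeparatingLeft :=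
  separatingLeft_polarBilin_prod (separatingLeft_polarBilin_neg hQ)
    (separatingLeft_polarBilin_prod separatingLeft_polarBilin_sq
      (separatingLeft_polarBilin_neg separatingLeft_polarBilin_sq))

theorem conjMat_jmat (x : V × ℝ × ℝ) : conjMat (jmat Q x) = -jmat Q x := by
  ext i j
  fin_cases i <;> fin_cases j <;> simp [conjMat, jmat]

theorem map_star_eq_conjMat
    (F : CliffordAlgebra (negQhat Q) →ₐ[ℝ] Matrix (Fin 2) (Fin 2) (CliffordAlgebra (-Q)))
    (hF : ∀ x, F (ι (negQhat Q) x) = jmat Q x) (z : CliffordAlgebra (negQhat Q)) :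
    F (star z) = conjMat (F z) := by
  induction z using CliffordAlgebra.induction with
  | algebraMap r => rw [star_algebraMap, AlgHom.commutes, conjMat_algebraMap]
  | ι x => rw [star_ι, map_neg, hF, conjMat_jmat]
  | mul z₁ z₂ h₁ h₂ => rw [star_mul, map_mul, map_mul, h₁, h₂, conjMat_mul]
  | add z₁ z₂ h₁ h₂ => rw [star_add, map_add, map_add, h₁, h₂, conjMat_add]

theorem eq_jmat_iff {p q r s : CliffordAlgebra (-Q)} {y : V × ℝ × ℝ} :
    !![p, q; r, s] = jmat Q y ↔ p = ι (-Q) y.1 ∧ q = algebraMap ℝ _ (y.2.1 - y.2.2) ∧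
      r = algebraMap ℝ _ (y.2.1 + y.2.2) ∧ s = -ι (-Q) y.1 := by
  simp [jmat, and_assoc]

theorem jmat_nullZero : jmat Q (0, 1 / 2, 1 / 2) = !![0, 0; 1, 0] := by
  rw [eq_comm, eq_jmat_iff]; norm_num

theorem jmat_nullInfty : jmat Q (0, 1 / 2, -1 / 2) = !![0, 1; 0, 0] := by
  rw [eq_comm, eq_jmat_iff]; norm_num

theorem IsVahlen.exists_conjMat_mul_jmat_mul_eq (hQ : (polarBilin Q).SeparatingLeft)
    {F : CliffordAlgebra (negQhat Q) ≃ₐ[ℝ] Matrix (Fin 2) (Fin 2) (CliffordAlgebra (-Q))}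
    (hF : ∀ x, F (ι (negQhat Q) x) = jmat Q x)
    {A : Matrix (Fin 2) (Fin 2) (CliffordAlgebra (-Q))} (hA : IsVahlen Q F A) (x : V × ℝ × ℝ) :
    ∃ y, conjMat A * jmat Q x * A = jmat Q y := by
  obtain ⟨hu, hconj⟩ := hA
  have hΓ (x : V × ℝ × ℝ) : ∃ y, F.symm A * ι _ x = ι _ y * involute (F.symm A) := by
    obtain ⟨y, hy⟩ := hconj x
    refine ⟨y, ?_⟩
    rw [← hy, mul_assoc _ (Ring.inverse _), Ring.inverse_mul_cancel _ (hu.map involute), mul_one]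
  obtain ⟨y, hy⟩ :=
    exists_star_mul_ι_mul_eq_ι (separatingLeft_polarBilin_negQhat hQ) hu hΓ x
  refine ⟨y, ?_⟩
  have h := congrArg F hy
  rwa [map_mul, map_mul, ← AlgEquiv.coe_toAlgHom, map_star_eq_conjMat F.toAlgHom hF,
    AlgEquiv.coe_toAlgHom, AlgEquiv.apply_symm_apply, hF, hF] at h

end Vahlen

/-- if `A = [[a,b],[c,d]]` is a Vahlen matrix then `ã a, b̃ b, c̃ c, d̃ d`
are real scalars, and consequently `(x c~ + d~)(cx + d)` is a real scalar for every
`x ∈ V`. -/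
theorem vahlen_entries_real (V : Type*) [AddCommGroup V] [Module ℝ V]
    (Q : QuadraticForm ℝ V)
    (hQnd : ∀ w : V, (∀ u : V, QuadraticMap.polar Q w u = 0) → w = 0)
    (F : CliffordAlgebra (negQhat Q) ≃ₐ[ℝ] Matrix (Fin 2) (Fin 2) (CliffordAlgebra (-Q)))
    (hF : ∀ x : V × ℝ × ℝ, F (ι (negQhat Q) x) = jmat Q x)
    (a b c d : CliffordAlgebra (-Q))
    (hA : IsVahlen Q F !![a, b; c, d]) :
    (∃ r : ℝ, reverse a * a = algebraMap ℝ _ r) ∧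
    (∃ r : ℝ, reverse b * b = algebraMap ℝ _ r) ∧
    (∃ r : ℝ, reverse c * c = algebraMap ℝ _ r) ∧
    (∃ r : ℝ, reverse d * d = algebraMap ℝ _ r) ∧
    (∀ x : V, ∃ r : ℝ,
      (ι (-Q) x * reverse c + reverse d) * (c * ι (-Q) x + d) = algebraMap ℝ _ r) := by
  obtain ⟨y₀, h₀⟩ := hA.exists_conjMat_mul_jmat_mul_eq hQnd hF (0, 1 / 2, 1 / 2)
  obtain ⟨y₁, h₁⟩ := hA.exists_conjMat_mul_jmat_mul_eq hQnd hF (0, 1 / 2, -1 / 2)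
  rw [jmat_nullZero, conjMat_mul_nullZero_mul, eq_jmat_iff] at h₀
  rw [jmat_nullInfty, conjMat_mul_nullInfty_mul, eq_jmat_iff] at h₁
  obtain ⟨-, hb, ha, -⟩ := h₀
  obtain ⟨hdc, hd, hc, -⟩ := h₁
  rw [neg_eq_iff_eq_neg, ← map_neg] at hb hc
  refine ⟨⟨_, ha⟩, ⟨_, hb⟩, ⟨_, hc⟩, ⟨_, hd⟩, fun x => ?_⟩
  have h := reverse_mul_self_mul_ι_add_eq hc hd hdc x
  rw [map_add, reverse.map_mul, reverse_ι] at h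
  exact ⟨_, h⟩
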